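/- Suppose a nonnegative sequence $(d_k)$ satisfies: for every $\alpha \in (0,1)$ and every $k$ with $d_k \le \bar\tau$, it holds that $d_{k + \lceil A/\alpha^{2d}\rceil + 1} \le \alpha d_k$, and $(d_k)$ is non-increasing with $d_{k_0} \le \bar\tau$. Then for every $\tau \in (0, \bar\tau]$, we have $d_k \le \tau$ for all $k \ge k_0 + \left(\lceil e A \rceil + 1\right) \lceil 2d \log(\bar\tau/\tau)\rceil$, where the contraction factor $\alpha = e^{-1/(2d)}$ is used. -/
import Mathlib


theorem eventual_linear_rate_of_contraction
    (A : ℝ) (hA : 0 < A) (d : ℕ) (hd : 1 ≤ d)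
    (τbar : ℝ) (hτbar : 0 < τbar)
    (dk : ℕ → ℝ) (hpos : ∀ k, 0 ≤ dk k)
    (hmono : ∀ k l, k ≤ l → dk l ≤ dk k)
    (k₀ : ℕ) (hk₀ : dk k₀ ≤ τbar)
    (hcontr : ∀ α : ℝ, 0 < α → α < 1 → ∀ k ≥ k₀,
      dk (k + ⌈A * α ^ (-(2 * (d : ℝ)))⌉₊ + 1) ≤ α * dk k) :
    ∀ τ : ℝ, 0 < τ → τ ≤ τbar →
      ∀ k ≥ k₀ + (⌈Real.exp 1 * A⌉₊ + 1) * ⌈2 * (d : ℝ) * Real.log (τbar / τ)⌉₊,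
        dk k ≤ τ := by
  have hdpos : (0:ℝ) < 2 * d := by positivity
  set α : ℝ := Real.exp (-(1 / (2 * d))) with hα
  have hα0 : 0 < α := Real.exp_pos _
  have hα1 : α < 1 := by
    rw [hα, Real.exp_lt_one_iff]
    simp only [neg_neg, Left.neg_neg_iff]
    positivity
  have hpow : α ^ (-(2 * (d : ℝ))) = Real.exp 1 := by
    rw [hα, ← Real.exp_mul]
    congr 1
    field_simp
  have key : ∀ n : ℕ, dk (k₀ + (⌈Real.exp 1 * A⌉₊ + 1) * n) ≤ α ^ n * τbar := by
    intro n
    induction n with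
    | zero => simpa using hk₀
    | succ n ih =>
      have h1 := hcontr α hα0 hα1 (k₀ + (⌈Real.exp 1 * A⌉₊ + 1) * n) (Nat.le_add_right _ _)
      rw [hpow] at h1
      have heq : k₀ + (⌈Real.exp 1 * A⌉₊ + 1) * n + ⌈A * Real.exp 1⌉₊ + 1
          = k₀ + (⌈Real.exp 1 * A⌉₊ + 1) * (n + 1) := by
        rw [mul_comm A]; ring
      rw [heq] at h1
      calc dk (k₀ + (⌈Real.exp 1 * A⌉₊ + 1) * (n + 1)) ≤ α * dk (k₀ + (⌈Real.exp 1 * A⌉₊ + 1) * n) := h1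
        _ ≤ α * (α ^ n * τbar) := by exact mul_le_mul_of_nonneg_left ih hα0.le
        _ = α ^ (n + 1) * τbar := by ring
  intro τ hτ hττ k hk
  set n := ⌈2 * (d : ℝ) * Real.log (τbar / τ)⌉₊ with hn
  have h2 : dk k ≤ α ^ n * τbar := le_trans (hmono _ _ hk) (key n)
  refine h2.trans ?_
  -- α ^ n * τbar ≤ τ
  have hexp : α ^ n = Real.exp (-(n / (2 * d))) := by
    rw [hα, ← Real.exp_nat_mul]
    congr 1
    field_simp
  rw [hexp]
  have hlog : Real.log (τbar / τ) ≤ n / (2 * d) := by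
    rw [le_div_iff₀ hdpos, mul_comm]
    calc 2 * (d:ℝ) * Real.log (τbar / τ) ≤ n := Nat.le_ceil _
      _ = (n : ℝ) := rfl
  have : τbar / τ ≤ Real.exp (n / (2 * d)) := by
    calc τbar / τ = Real.exp (Real.log (τbar / τ)) := by
          rw [Real.exp_log (by positivity)]
      _ ≤ Real.exp (n / (2 * d)) := Real.exp_le_exp.mpr hlog
  rw [Real.exp_neg]
  rw [div_le_iff₀ hτ] at this
  calc (Real.exp (n / (2 * d)))⁻¹ * τbar ≤ (Real.exp (n / (2 * d)))⁻¹ * (Real.exp (n / (2 * d)) * τ) := by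
        apply mul_le_mul_of_nonneg_left this (by positivity)
    _ = τ := by field_simp
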